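/- Improper Fourier transform of the sinc function: let W > 0 and δ = 1/(2W). For every real ξ with |ξ| < W, lim_{T→∞} ∫_{−T}^{T} sinc(x/δ) e^{−2πiξx} dx = δ; and for every real ξ with |ξ| > W, lim_{T→∞} ∫_{−T}^{T} sinc(x/δ) e^{−2πiξx} dx = 0. -/

import Mathlib

/-!
Since `sinc (x / δ) = Real.sinc (a x)` with `a = 2πW` is even, only the cosine part of
`e^{-2πiξx}` survives, and product-to-sum with `b = 2πξ` gives
`Real.sinc (a x) cos (b x) = ((a + b) sinc ((a + b) x) + (a - b) sinc ((a - b) x)) / (2a)`.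
After rescaling, `∫_{-T}^{T} c sinc (c x) dx → sign c · π` by the Dirichlet integral
`∫₀^∞ sin x / x dx = π / 2`, so the limit is `(sign (a + b) + sign (a - b)) π / (2a)`: this is
`1 / (2W) = δ` when both signs are positive, i.e. `|ξ| < W`, and `0` when they differ.
The Dirichlet integral comes from `1 / x = ∫₀^∞ e^{-xt} dt` and Fubini: the integral of
`sin x e^{-xt}` over `[0, T]` is explicit, and its `T`-dependent part contributes `O(1 / T)`.
-/

open Real Filter

/-- The normalized sinc function `sinc x = sin(πx)/(πx)`, with `sinc 0 = 1`. -/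
noncomputable def sinc (x : ℝ) : ℝ := if x = 0 then 1 else Real.sin (π * x) / (π * x)

open MeasureTheory Set Topology

theorem sinc_eq_real_sinc (x : ℝ) : _root_.sinc x = Real.sinc (π * x) := by
  simp [_root_.sinc, Real.sinc, Real.pi_ne_zero]

theorem sinc_div (x δ : ℝ) : _root_.sinc (x / δ) = Real.sinc (π / δ * x) := by
  rw [sinc_eq_real_sinc, mul_div, div_mul_eq_mul_div]

namespace intervalIntegral

theorem integral_neg_self_of_odd {E : Type*} [NormedAddCommGroup E] [NormedSpace ℝ E]
    {f : ℝ → E} (hf : Function.Odd f) (T : ℝ) : ∫ x in -T..T, f x = 0 := by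
  have h := integral_comp_neg (a := -T) (b := T) f
  simp only [hf _, integral_neg, neg_neg] at h
  refine (smul_eq_zero.mp ?_).resolve_left (two_ne_zero (α := ℝ))
  nth_rewrite 1 [two_smul, ← h]
  exact neg_add_cancel _

theorem integral_neg_self_eq_two_mul_of_even {f : ℝ → ℝ} (hf : Function.Even f) {T : ℝ}
    (hfi : IntervalIntegrable f volume (-T) T) :
    ∫ x in -T..T, f x = 2 * ∫ x in 0..T, f x := by
  have hleft : ∫ x in -T..0, f x = ∫ x in 0..T, f x := by
    simpa [hf _] using (integral_comp_neg (a := 0) (b := T) f).symm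
  have h0 : (0 : ℝ) ∈ uIcc (-T) T := by
    rcases le_total 0 T with h | h <;> simp [h]
  rw [← integral_add_adjacent_intervals (hfi.mono_set (uIcc_subset_uIcc_left h0))
    (hfi.mono_set (uIcc_subset_uIcc_right h0)), hleft, two_mul]

end intervalIntegral

namespace Real

theorem mul_sinc (x : ℝ) : x * sinc x = sin x := by
  rcases eq_or_ne x 0 with rfl | hx
  · simp
  · rw [sinc_of_ne_zero hx, mul_div_cancel₀ _ hx]

theorem sinc_mul_mul_cos_mul (a b x : ℝ) (ha : a ≠ 0) :
    sinc (a * x) * cos (b * x) =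
      ((a + b) * sinc ((a + b) * x) + (a - b) * sinc ((a - b) * x)) / (2 * a) := by
  rcases eq_or_ne x 0 with rfl | hx
  · simp only [mul_zero, sinc_zero, cos_zero]; field_simp; ring
  have hsin : sin ((a + b) * x) + sin ((a - b) * x) = 2 * sin (a * x) * cos (b * x) := by
    rw [add_mul, sub_mul, sin_add, sin_sub]; ring
  simp only [← mul_sinc] at hsin
  rw [eq_div_iff (mul_ne_zero two_ne_zero ha)]
  refine mul_right_cancel₀ hx ?_
  linear_combination -hsin

theorem integral_exp_neg_mul_Ioi {x : ℝ} (hx : 0 < x) :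
    ∫ t in Ioi 0, exp (-(x * t)) = x⁻¹ := by
  simpa [neg_mul] using integral_exp_mul_Ioi (neg_neg_of_pos hx) 0

theorem integrableOn_exp_neg_mul_Ioi {x : ℝ} (hx : 0 < x) :
    IntegrableOn (fun t => exp (-(x * t))) (Ioi 0) := by
  simpa [neg_mul] using exp_neg_integrableOn_Ioi 0 hx

theorem integral_sin_mul_exp_neg_mul (t T : ℝ) :
    ∫ x in 0..T, sin x * exp (-(x * t)) =
      (1 - exp (-(T * t)) * (cos T + t * sin T)) / (1 + t ^ 2) := by
  have ht : 1 + t ^ 2 ≠ 0 := by positivity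
  have hderiv : ∀ x ∈ uIcc 0 T, HasDerivAt
      (fun x => -(exp (-(x * t)) * (cos x + t * sin x)) / (1 + t ^ 2))
      (sin x * exp (-(x * t))) x := by
    intro x _
    have hexp : HasDerivAt (fun x => exp (-(x * t))) (exp (-(x * t)) * -t) x := by
      simpa using ((hasDerivAt_id x).mul_const t).neg.exp
    have htrig : HasDerivAt (fun x => cos x + t * sin x) (-sin x + t * cos x) x :=
      (hasDerivAt_cos x).add ((hasDerivAt_sin x).const_mul t)
    refine ((hexp.mul htrig).neg.div_const (1 + t ^ 2)).congr_deriv ?_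
    field_simp
    ring
  rw [intervalIntegral.integral_eq_sub_of_hasDerivAt hderiv
    (Continuous.intervalIntegrable (by fun_prop) _ _)]
  simp only [zero_mul, neg_zero, exp_zero, cos_zero, sin_zero, mul_zero, add_zero]
  ring

theorem integrable_sin_mul_exp_neg_mul_prod (T : ℝ) :
    Integrable (fun p : ℝ × ℝ => sin p.1 * exp (-(p.1 * p.2)))
      ((volume.restrict (Ioc 0 T)).prod (volume.restrict (Ioi 0))) := by
  have hmeas : AEStronglyMeasurable (fun p : ℝ × ℝ => sin p.1 * exp (-(p.1 * p.2)))
      ((volume.restrict (Ioc 0 T)).prod (volume.restrict (Ioi 0))) :=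
    (by fun_prop : Continuous fun p : ℝ × ℝ => sin p.1 * exp (-(p.1 * p.2))).aestronglyMeasurable
  rw [integrable_prod_iff hmeas]
  refine ⟨?_, ?_⟩
  · filter_upwards [ae_restrict_mem measurableSet_Ioc] with x hx
    exact (integrableOn_exp_neg_mul_Ioi hx.1).const_mul (sin x)
  · -- the inner integral is `|sin x| / x ≤ 1`
    refine Integrable.mono' (g := fun _ => 1) (integrableOn_const measure_Ioc_lt_top.ne)
      hmeas.norm.integral_prod_right' ?_
    filter_upwards [ae_restrict_mem measurableSet_Ioc] with x hx
    simp only [norm_mul, Real.norm_eq_abs, abs_exp]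
    rw [integral_const_mul, integral_exp_neg_mul_Ioi hx.1, ← div_eq_mul_inv,
      abs_of_nonneg (div_nonneg (abs_nonneg _) hx.1.le), div_le_one hx.1]
    exact (abs_sin_le_abs).trans (abs_of_pos hx.1).le

theorem integral_sinc_eq_integral_Ioi {T : ℝ} (hT : 0 ≤ T) :
    ∫ x in 0..T, sinc x =
      ∫ t in Ioi 0, (1 - exp (-(T * t)) * (cos T + t * sin T)) / (1 + t ^ 2) := by
  calc ∫ x in 0..T, sinc x
      = ∫ x in Ioc 0 T, ∫ t in Ioi 0, sin x * exp (-(x * t)) := by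
        rw [intervalIntegral.integral_of_le hT]
        refine setIntegral_congr_fun measurableSet_Ioc fun x hx => ?_
        rw [integral_const_mul, integral_exp_neg_mul_Ioi hx.1, sinc_of_ne_zero hx.1.ne',
          div_eq_mul_inv]
    _ = ∫ t in Ioi 0, ∫ x in Ioc 0 T, sin x * exp (-(x * t)) :=
        integral_integral_swap (integrable_sin_mul_exp_neg_mul_prod T)
    _ = ∫ t in Ioi 0, (1 - exp (-(T * t)) * (cos T + t * sin T)) / (1 + t ^ 2) := by
        refine setIntegral_congr_fun measurableSet_Ioi fun t _ => ?_
        rw [← intervalIntegral.integral_of_le hT, integral_sin_mul_exp_neg_mul]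

theorem norm_exp_mul_cos_add_sin_div_le {T t : ℝ} (ht : 0 < t) :
    ‖exp (-(T * t)) * (cos T + t * sin T) / (1 + t ^ 2)‖ ≤ 2 * exp (-(T * t)) := by
  have htrig : |cos T + t * sin T| ≤ 1 + t := by
    calc |cos T + t * sin T| ≤ |cos T| + t * |sin T| := by
          simpa [abs_mul, abs_of_pos ht] using abs_add_le (cos T) (t * sin T)
      _ ≤ 1 + t := by
          gcongr
          exacts [abs_cos_le_one T, mul_le_of_le_one_right ht.le (abs_sin_le_one T)]
  rw [Real.norm_eq_abs, abs_div, abs_mul, abs_exp,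
    abs_of_pos (by positivity : (0 : ℝ) < 1 + t ^ 2), div_le_iff₀ (by positivity)]
  calc exp (-(T * t)) * |cos T + t * sin T| ≤ exp (-(T * t)) * (2 * (1 + t ^ 2)) := by
        gcongr
        nlinarith [sq_nonneg (t - 1)]
    _ = 2 * exp (-(T * t)) * (1 + t ^ 2) := by ring

theorem tendsto_integral_sinc : Tendsto (fun T => ∫ x in 0..T, sinc x) atTop (𝓝 (π / 2)) := by
  set R : ℝ → ℝ := fun T => ∫ t in Ioi 0, exp (-(T * t)) * (cos T + t * sin T) / (1 + t ^ 2)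
  have hR : ∀ T, 0 < T → ‖R T‖ ≤ 2 * T⁻¹ := by
    intro T hT
    have hbound := ae_restrict_of_forall_mem (μ := volume) measurableSet_Ioi fun t (ht : 0 < t) =>
      norm_exp_mul_cos_add_sin_div_le (T := T) ht
    calc ‖R T‖ ≤ ∫ t in Ioi 0, 2 * exp (-(T * t)) :=
          norm_integral_le_of_norm_le ((integrableOn_exp_neg_mul_Ioi hT).const_mul 2) hbound
      _ = 2 * T⁻¹ := by rw [integral_const_mul, integral_exp_neg_mul_Ioi hT]
  have hR0 : Tendsto R atTop (𝓝 0) := squeeze_zero_norm'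
    (eventually_gt_atTop 0 |>.mono hR)
    (by simpa using (tendsto_inv_atTop_zero (𝕜 := ℝ)).const_mul 2)
  refine (by simpa using tendsto_const_nhds.sub hR0 : Tendsto (fun T => π / 2 - R T) _ _).congr' ?_
  filter_upwards [eventually_gt_atTop 0] with T hT
  have hsplit : ∀ t, (1 - exp (-(T * t)) * (cos T + t * sin T)) / (1 + t ^ 2) =
      (1 + t ^ 2)⁻¹ - exp (-(T * t)) * (cos T + t * sin T) / (1 + t ^ 2) := fun t => by
    rw [sub_div, one_div]
  have hint : IntegrableOn
      (fun t => exp (-(T * t)) * (cos T + t * sin T) / (1 + t ^ 2)) (Ioi 0) :=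
    Integrable.mono' ((integrableOn_exp_neg_mul_Ioi hT).const_mul 2)
      ((Continuous.div (by fun_prop) (by fun_prop) fun t => by positivity).aestronglyMeasurable)
      (ae_restrict_of_forall_mem measurableSet_Ioi fun t ht => norm_exp_mul_cos_add_sin_div_le ht)
  rw [integral_sinc_eq_integral_Ioi hT.le, funext hsplit,
    integral_sub integrable_inv_one_add_sq.integrableOn hint, integral_Ioi_inv_one_add_sq,
    arctan_zero, sub_zero]

theorem tendsto_integral_neg_self_sinc :
    Tendsto (fun T => ∫ x in -T..T, sinc x) atTop (𝓝 π) := by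
  have h := tendsto_integral_sinc.const_mul 2
  rw [mul_div_cancel₀ _ two_ne_zero] at h
  refine h.congr fun T => ?_
  rw [intervalIntegral.integral_neg_self_eq_two_mul_of_even sinc_neg
    (continuous_sinc.intervalIntegrable _ _)]

theorem tendsto_integral_mul_sinc_mul (c : ℝ) :
    Tendsto (fun T => ∫ x in -T..T, c * sinc (c * x)) atTop (𝓝 (sign c * π)) := by
  have hscale : ∀ T, c ≠ 0 →
      ∫ x in -T..T, c * sinc (c * x) = ∫ x in -(c * T)..(c * T), sinc x := by
    intro T hc
    rw [intervalIntegral.integral_const_mul, intervalIntegral.integral_comp_mul_left sinc hc,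
      smul_eq_mul, mul_neg, mul_inv_cancel_left₀ hc]
  rcases lt_trichotomy c 0 with hc | rfl | hc
  · rw [sign_of_neg hc, neg_one_mul]
    refine (tendsto_integral_neg_self_sinc.comp
      (tendsto_id.const_mul_atTop (neg_pos.mpr hc))).neg.congr fun T => ?_
    rw [hscale T hc.ne, intervalIntegral.integral_symm, Function.comp_apply, id, neg_mul, neg_neg]
  · simp
  · rw [sign_of_pos hc, one_mul]
    exact (tendsto_integral_neg_self_sinc.comp (tendsto_id.const_mul_atTop hc)).congr
      fun T => (hscale T hc.ne').symm

theorem tendsto_integral_sinc_mul_mul_cos_mul (a b : ℝ) (ha : a ≠ 0) :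
    Tendsto (fun T => ∫ x in -T..T, sinc (a * x) * cos (b * x)) atTop
      (𝓝 ((sign (a + b) + sign (a - b)) * π / (2 * a))) := by
  have hlim := ((tendsto_integral_mul_sinc_mul (a + b)).add
    (tendsto_integral_mul_sinc_mul (a - b))).div_const (2 * a)
  rw [← add_mul] at hlim
  refine hlim.congr fun T => ?_
  simp only [sinc_mul_mul_cos_mul _ _ _ ha]
  rw [intervalIntegral.integral_div, intervalIntegral.integral_add
    (Continuous.intervalIntegrable (by fun_prop) _ _)
    (Continuous.intervalIntegrable (by fun_prop) _ _)]

end Real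

theorem integral_ofReal_mul_exp_eq_integral_mul_cos_of_even {f : ℝ → ℝ} (hf : Function.Even f)
    (hfc : Continuous f) (ξ T : ℝ) :
    ∫ x in -T..T, (f x : ℂ) * Complex.exp (-2 * π * Complex.I * ξ * x) =
      ↑(∫ x in -T..T, f x * cos (2 * π * ξ * x)) := by
  have hsplit : ∀ x : ℝ, (f x : ℂ) * Complex.exp (-2 * π * Complex.I * ξ * x) =
      ↑(f x * cos (2 * π * ξ * x)) - ↑(f x * sin (2 * π * ξ * x)) * Complex.I := by
    intro x
    rw [show -2 * π * Complex.I * ξ * x = ↑(-(2 * π * ξ * x)) * Complex.I by push_cast; ring,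
      Complex.exp_mul_I, ← Complex.ofReal_cos, ← Complex.ofReal_sin, cos_neg, sin_neg]
    push_cast
    ring
  have hodd : Function.Odd fun x => f x * sin (2 * π * ξ * x) := fun x => by
    simp only [mul_neg, sin_neg, hf x]
  simp_rw [hsplit]
  rw [intervalIntegral.integral_sub (Continuous.intervalIntegrable (by fun_prop) _ _)
      (Continuous.intervalIntegrable (by fun_prop) _ _), intervalIntegral.integral_mul_const,
    intervalIntegral.integral_ofReal, intervalIntegral.integral_ofReal,
    intervalIntegral.integral_neg_self_of_odd hodd, Complex.ofReal_zero, zero_mul, sub_zero]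

/-- Improper Fourier transform of the sinc function: with `δ = 1/(2W)`,
`lim_{T→∞} ∫_{−T}^{T} sinc(x/δ) e^{−2πiξx} dx` equals `δ` for `|ξ| < W` and `0` for
`|ξ| > W` (i.e. the transform is `δ·rect(ξδ)`). -/
theorem sinc_fourier_transform (W : ℝ) (hW : 0 < W) (δ : ℝ) (hδ : δ = 1 / (2 * W))
    (ξ : ℝ) :
    (|ξ| < W →
      Tendsto
        (fun T : ℝ => ∫ x in (-T)..T,
          (_root_.sinc (x / δ) : ℂ) * Complex.exp (-2 * (π : ℂ) * Complex.I * ξ * x))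
        atTop (nhds (δ : ℂ))) ∧
    (|ξ| > W →
      Tendsto
        (fun T : ℝ => ∫ x in (-T)..T,
          (_root_.sinc (x / δ) : ℂ) * Complex.exp (-2 * (π : ℂ) * Complex.I * ξ * x))
        atTop (nhds 0)) := by
  have hπδ : π / δ = 2 * π * W := by
    rw [hδ]
    field_simp
  have heven : Function.Even fun x => Real.sinc (2 * π * W * x) := fun x => by
    simp only [mul_neg, Real.sinc_neg]
  have hlim : ∀ L : ℝ, (sign (2 * π * W + 2 * π * ξ) + sign (2 * π * W - 2 * π * ξ)) * π /
      (2 * (2 * π * W)) = L → Tendsto (fun T : ℝ => ∫ x in (-T)..T,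
        (Real.sinc (2 * π * W * x) : ℂ) * Complex.exp (-2 * (π : ℂ) * Complex.I * ξ * x))
        atTop (nhds (L : ℂ)) := by
    rintro L rfl
    simp_rw [integral_ofReal_mul_exp_eq_integral_mul_cos_of_even heven
      (Real.continuous_sinc.comp (continuous_const_mul _))]
    exact (Complex.continuous_ofReal.tendsto _).comp
      (Real.tendsto_integral_sinc_mul_mul_cos_mul _ _ (by positivity))
  simp only [sinc_div, hπδ]
  constructor
  · intro hξ
    obtain ⟨hlo, hhi⟩ := abs_lt.mp hξ
    apply hlim
    rw [sign_of_pos (by nlinarith [pi_pos]), sign_of_pos (by nlinarith [pi_pos]), hδ]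
    field_simp
    ring
  · intro hξ
    apply hlim
    rcases lt_abs.mp hξ with h | h
    · rw [sign_of_pos (by nlinarith [pi_pos]), sign_of_neg (by nlinarith [pi_pos])]
      simp
    · rw [sign_of_neg (by nlinarith [pi_pos]), sign_of_pos (by nlinarith [pi_pos])]
      simp
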